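/- Let ν > -1/2 and n ∈ ℕ₀. Then for every x > 0, -Δ_ν φ_n(x) - x² φ_n(x) + 2x φ_n'(x) + (2ν+2) φ_n(x) = 4 √(n+1) √(n+ν+1) · φ_{n+1}(x). -/

import Mathlib

open MeasureTheory Filter Set

/-- The Bessel differential operator `Δ_ν` acting on real-valued functions. -/
noncomputable def besselOp (ν : ℝ) (g : ℝ → ℝ) : ℝ → ℝ :=
  fun x => deriv (deriv g) x + ((2 * ν + 1) / x) * deriv g x

/-- The eigenfunctions
`φ_n(x) = ((-1)^n / √(2^{4n-1} n! Γ(n+ν+1))) e^{x²/2} (Δ_ν^n e^{-x²})(x)`. -/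
noncomputable def lagPhi (ν : ℝ) (n : ℕ) : ℝ → ℝ :=
  fun x =>
    ((-1 : ℝ) ^ n /
      Real.sqrt ((2 : ℝ) ^ (4 * (n : ℝ) - 1) * (n.factorial : ℝ) *
        Real.Gamma ((n : ℝ) + ν + 1))) *
      Real.exp (x ^ 2 / 2) * ((besselOp ν)^[n] (fun t => Real.exp (-t ^ 2)) x)

/-!
Writing `φ_n = c_n e^{x²/2} Δ_ν^n e^{-x²}`, the operator `h ↦ -Δ_ν h - x² h + 2x h' + (2ν+2) h`
is conjugate under multiplication by `e^{x²/2}` to `-Δ_ν`: it sends `e^{x²/2} g` to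
`-e^{x²/2} Δ_ν g`. Hence it maps `φ_n` to `-c_n e^{x²/2} Δ_ν^{n+1} e^{-x²}`, and the identity
reduces to `-c_n = 4 √(n+1) √(n+ν+1) c_{n+1}`, which is `Γ(s+1) = s Γ(s)`.
-/

open scoped ContDiff Topology

noncomputable def raisingOp (ν : ℝ) (h : ℝ → ℝ) (x : ℝ) : ℝ :=
  -(besselOp ν h x) - x ^ 2 * h x + 2 * x * deriv h x + (2 * ν + 2) * h x

noncomputable def lagNormSq (ν : ℝ) (n : ℕ) : ℝ :=
  (2 : ℝ) ^ (4 * (n : ℝ) - 1) * (n.factorial : ℝ) * Real.Gamma ((n : ℝ) + ν + 1)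

noncomputable def lagCoeff (ν : ℝ) (n : ℕ) : ℝ :=
  (-1 : ℝ) ^ n / Real.sqrt (lagNormSq ν n)

section Bessel

variable (ν : ℝ)

lemma besselOp_const_mul (c : ℝ) (g : ℝ → ℝ) :
    besselOp ν (fun y => c * g y) = fun y => c * besselOp ν g y := by
  funext y
  simp only [besselOp, deriv_const_mul_field']
  ring

lemma contDiffOn_besselOp {g : ℝ → ℝ} {s : Set ℝ} (hg : ContDiffOn ℝ ∞ g s) (hs : IsOpen s)
    (h0 : (0 : ℝ) ∉ s) : ContDiffOn ℝ ∞ (besselOp ν g) s := by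
  have hg' : ContDiffOn ℝ ∞ (deriv g) s := hg.deriv_of_isOpen hs le_rfl
  have hg'' : ContDiffOn ℝ ∞ (deriv (deriv g)) s := hg'.deriv_of_isOpen hs le_rfl
  exact hg''.add ((contDiffOn_const.div contDiffOn_id
    fun x hx => ne_of_mem_of_not_mem hx h0).mul hg')

lemma contDiffOn_besselOp_iterate {g : ℝ → ℝ} {s : Set ℝ} (hg : ContDiffOn ℝ ∞ g s)
    (hs : IsOpen s) (h0 : (0 : ℝ) ∉ s) (n : ℕ) : ContDiffOn ℝ ∞ ((besselOp ν)^[n] g) s := by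
  induction n with
  | zero => exact hg
  | succ n ih =>
    rw [Function.iterate_succ_apply']
    exact contDiffOn_besselOp ν ih hs h0

lemma raisingOp_exp_mul {g : ℝ → ℝ} {x : ℝ} (hx : x ≠ 0)
    (hg : ∀ᶠ y in 𝓝 x, DifferentiableAt ℝ g y) (hg' : DifferentiableAt ℝ (deriv g) x) :
    raisingOp ν (fun y => Real.exp (y ^ 2 / 2) * g y) x
      = -(Real.exp (x ^ 2 / 2) * besselOp ν g x) := by
  have hexp (y : ℝ) :
      HasDerivAt (fun t => Real.exp (t ^ 2 / 2)) (y * Real.exp (y ^ 2 / 2)) y := by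
    convert ((hasDerivAt_pow 2 y).div_const 2).exp using 1
    ring
  have hd1 : deriv (fun y => Real.exp (y ^ 2 / 2) * g y)
      =ᶠ[𝓝 x] fun y => Real.exp (y ^ 2 / 2) * (y * g y + deriv g y) := by
    filter_upwards [hg] with y hy
    have h : HasDerivAt (fun y => Real.exp (y ^ 2 / 2) * g y) _ y :=
      (hexp y).mul hy.hasDerivAt
    rw [h.deriv]
    ring
  have hd2 : deriv (deriv fun y => Real.exp (y ^ 2 / 2) * g y) x
      = Real.exp (x ^ 2 / 2) * ((x ^ 2 + 1) * g x + 2 * x * deriv g x + deriv (deriv g) x) := by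
    have h : HasDerivAt (fun y => Real.exp (y ^ 2 / 2) * (y * g y + deriv g y)) _ x :=
      (hexp x).mul (((hasDerivAt_id' x).mul hg.self_of_nhds.hasDerivAt).add hg'.hasDerivAt)
    rw [hd1.deriv_eq, h.deriv]
    ring
  simp only [raisingOp, besselOp, hd1.eq_of_nhds, hd2]
  field_simp
  ring

end Bessel

lemma lagNormSq_succ (ν : ℝ) (n : ℕ) (hν : (n : ℝ) + ν + 1 ≠ 0) :
    lagNormSq ν (n + 1) = 16 * ((n + 1) * ((n + ν + 1) * lagNormSq ν n)) := by
  have h16 : (2 : ℝ) ^ (4 : ℝ) = 16 := by norm_num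
  simp only [lagNormSq]
  push_cast [Nat.factorial_succ]
  rw [show 4 * ((n : ℝ) + 1) - 1 = 4 * n - 1 + 4 by ring, Real.rpow_add two_pos, h16,
    show (n : ℝ) + 1 + ν + 1 = n + ν + 1 + 1 by ring, Real.Gamma_add_one hν]
  ring

lemma lagCoeff_succ (ν : ℝ) (hν : -1 < ν) (n : ℕ) :
    4 * Real.sqrt ((n : ℝ) + 1) * Real.sqrt ((n : ℝ) + ν + 1) * lagCoeff ν (n + 1)
      = -lagCoeff ν n := by
  have ha : (0 : ℝ) < n + 1 := by positivity
  have hb : (0 : ℝ) < n + ν + 1 := by linarith [(Nat.cast_nonneg n : (0 : ℝ) ≤ n)]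
  have hsqrt : Real.sqrt (lagNormSq ν (n + 1))
      = 4 * Real.sqrt ((n : ℝ) + 1) * Real.sqrt ((n : ℝ) + ν + 1) *
          Real.sqrt (lagNormSq ν n) := by
    rw [lagNormSq_succ ν n hb.ne', Real.sqrt_mul (by norm_num), Real.sqrt_mul ha.le,
      Real.sqrt_mul hb.le, show (16 : ℝ) = 4 ^ 2 by norm_num, Real.sqrt_sq (by norm_num)]
    ring
  have ha' := Real.sqrt_pos.2 ha
  have hb' := Real.sqrt_pos.2 hb
  rw [lagCoeff, lagCoeff, hsqrt, pow_succ]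
  field_simp

theorem stmt15 (ν : ℝ) (hν : ν > -(1/2)) (n : ℕ) :
    ∀ x > (0 : ℝ),
      -(besselOp ν (lagPhi ν n) x) - x ^ 2 * lagPhi ν n x + 2 * x * deriv (lagPhi ν n) x +
          (2 * ν + 2) * lagPhi ν n x
        = 4 * Real.sqrt ((n : ℝ) + 1) * Real.sqrt ((n : ℝ) + ν + 1) * lagPhi ν (n + 1) x := by
  intro x hx
  set F := (besselOp ν)^[n] (fun t => Real.exp (-t ^ 2))
  have hF : ContDiffOn ℝ ∞ (fun y => lagCoeff ν n * F y) (Ioi 0) :=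
    contDiffOn_const.mul <| contDiffOn_besselOp_iterate ν (by fun_prop) isOpen_Ioi
      self_notMem_Ioi n
  have hφ : lagPhi ν n = fun y => Real.exp (y ^ 2 / 2) * (lagCoeff ν n * F y) := by
    funext y
    simp only [lagPhi, lagCoeff, lagNormSq, F]
    ring
  have hFx : ∀ᶠ y in 𝓝 x, DifferentiableAt ℝ (fun y => lagCoeff ν n * F y) y := by
    filter_upwards [isOpen_Ioi.mem_nhds hx] with y hy
    exact (hF.contDiffAt (isOpen_Ioi.mem_nhds hy)).differentiableAt (by simp)
  have hF'x : DifferentiableAt ℝ (deriv fun y => lagCoeff ν n * F y) x :=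
    ((hF.deriv_of_isOpen isOpen_Ioi (m := ∞) le_rfl).contDiffAt
      (isOpen_Ioi.mem_nhds hx)).differentiableAt (by simp)
  have hφ' :
      lagPhi ν (n + 1) x = lagCoeff ν (n + 1) * Real.exp (x ^ 2 / 2) * besselOp ν F x := by
    simp only [lagPhi, lagCoeff, lagNormSq, F, Function.iterate_succ_apply']
  change raisingOp ν (lagPhi ν n) x = _
  rw [hφ, raisingOp_exp_mul ν hx.ne' hFx hF'x, besselOp_const_mul, hφ']
  linear_combination (-Real.exp (x ^ 2 / 2) * besselOp ν F x) * lagCoeff_succ ν (by linarith) n
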